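/- Let (A,∘,α,β) be a BiHom-pre-Lie superalgebra with α,β bijective and let R be a Rota-Baxter operator of weight zero on it (with R commuting with α and β). Then the even products x▷y = R(x)∘y and x◁y = −(−1)^{|x||y|}(α⁻¹β(y))∘R(αβ⁻¹(x)) define a BiHom-L-dendriform superalgebra structure (A,▷,◁,α,β) on A. -/

import Mathlib

/-!
Write `ε i j = (-1) ^ (i * j)`, `x ▷ y = R x ∘ y` and `x ◁ y = -ε (α⁻¹β y) ∘ R (αβ⁻¹ x)`.
Once the twisting maps are moved past each other and past `R`, each dendriform axiom is one
instance of the BiHom-pre-Lie identity combined with the Rota-Baxter identity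
`R a ∘ R b = R (R a ∘ b + a ∘ R b)`. The first axiom is the pre-Lie identity for `(R x, R y, z)`,
the Rota-Baxter identity at `(β x, α y)` and `(β y, α x)` merging the `▷`- and `◁`-terms; the second
is the pre-Lie identity for `(R x, α⁻²β z, α²β⁻¹ R y)`, the Rota-Baxter identity at
`(α x, α²β⁻¹ y)` merging the two terms with an outer `◁`. The signs cancel since `ε i j ε j i = 1`
and `ε` is additive in each argument.
-/

section Generalities

variable {S M : Type*}

theorem DirectSum.IsInternal.symm_mem [Ring S] [AddCommGroup M] [Module S M] {ι : Type*}
    [DecidableEq ι] {𝒜 : ι → Submodule S M} (hA : DirectSum.IsInternal 𝒜) (e : M ≃ₗ[S] M)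
    (he : ∀ i, ∀ a ∈ 𝒜 i, e a ∈ 𝒜 i) {i : ι} {a : M} (ha : a ∈ 𝒜 i) : e.symm a ∈ 𝒜 i := by
  have hmap : (fun i => (𝒜 i).map (e : M →ₗ[S] M)) = 𝒜 := by
    refine (hA.submodule_iSupIndep.le_iff_eq_of_iSup_eq_top ?_).mp
      fun i => Submodule.map_le_iff_le_comap.mpr (he i)
    rw [← Submodule.map_iSup, hA.submodule_iSup_eq_top, Submodule.map_top, LinearEquiv.range]
  rw [← congrFun hmap i] at ha
  exact (Submodule.mem_map_equiv _).mp ha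

theorem LinearEquiv.comm_symm [Semiring S] [AddCommMonoid M] [Module S M] {f : M → M}
    (e : M ≃ₗ[S] M) (h : ∀ a, f (e a) = e (f a)) (a : M) : f (e.symm a) = e.symm (f a) := by
  rw [e.eq_symm_apply, ← h, e.apply_symm_apply]

theorem LinearEquiv.symm_map₂ [Semiring S] [AddCommMonoid M] [Module S M] {c : M → M → M}
    (e : M ≃ₗ[S] M) (h : ∀ a b, e (c a b) = c (e a) (e b)) (a b : M) :
    e.symm (c a b) = c (e.symm a) (e.symm b) := by
  rw [e.symm_apply_eq, h, e.apply_symm_apply, e.apply_symm_apply]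

theorem neg_one_pow_val_add_mul [Ring S] (i j k : ZMod 2) :
    (-1 : S) ^ ((i + j).val * k.val) = (-1) ^ (i.val * k.val) * (-1) ^ (j.val * k.val) := by
  rw [← pow_add, ← add_mul, neg_one_pow_eq_pow_mod_two, ZMod.val_add, Nat.mod_mul_mod,
    ← neg_one_pow_eq_pow_mod_two]

theorem neg_one_pow_val_mul_add [Ring S] (i j k : ZMod 2) :
    (-1 : S) ^ (i.val * (j + k).val) = (-1) ^ (i.val * j.val) * (-1) ^ (i.val * k.val) := by
  rw [Nat.mul_comm, neg_one_pow_val_add_mul, Nat.mul_comm, Nat.mul_comm k.val]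

end Generalities

variable {K A : Type*} [CommRing K] [AddCommGroup A] [Module K A]

structure IsBiHomPreLieSuperalgebra (𝒜 : ZMod 2 → Submodule K A) (c : A →ₗ[K] A →ₗ[K] A)
    (α β : A ≃ₗ[K] A) : Prop where
  comm : ∀ a, α (β a) = β (α a)
  alpha_mem : ∀ i, ∀ a ∈ 𝒜 i, α a ∈ 𝒜 i
  beta_mem : ∀ i, ∀ a ∈ 𝒜 i, β a ∈ 𝒜 i
  mul_mem : ∀ i j, ∀ x ∈ 𝒜 i, ∀ y ∈ 𝒜 j, c x y ∈ 𝒜 (i + j)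
  alpha_mul : ∀ a b, α (c a b) = c (α a) (α b)
  beta_mul : ∀ a b, β (c a b) = c (β a) (β b)
  preLie : ∀ i j k, ∀ x ∈ 𝒜 i, ∀ y ∈ 𝒜 j, ∀ z ∈ 𝒜 k,
    c (c (β x) (α y)) (β z) - c (α (β x)) (c (α y) z)
      = ((-1 : K) ^ (i.val * j.val)) • (c (c (β y) (α x)) (β z) - c (α (β y)) (c (α x) z))

structure IsRotaBaxterOperator (𝒜 : ZMod 2 → Submodule K A) (c : A →ₗ[K] A →ₗ[K] A)
    (α β : A ≃ₗ[K] A) (R : A →ₗ[K] A) : Prop where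
  mem : ∀ i, ∀ a ∈ 𝒜 i, R a ∈ 𝒜 i
  alpha_comm : ∀ a, R (α a) = α (R a)
  beta_comm : ∀ a, R (β a) = β (R a)
  rotaBaxter : ∀ i j, ∀ x ∈ 𝒜 i, ∀ y ∈ 𝒜 j, c (R x) (R y) = R (c (R x) y + c x (R y))

/-- `x ▷ y`. -/
def rbSucc (c : A →ₗ[K] A →ₗ[K] A) (R : A →ₗ[K] A) (x y : A) : A := c (R x) y

/-- `x ◁ y`, for `x` of degree `i` and `y` of degree `j`. -/
def rbPrec (c : A →ₗ[K] A →ₗ[K] A) (α β : A ≃ₗ[K] A) (R : A →ₗ[K] A) (i j : ZMod 2)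
    (x y : A) : A :=
  -(((-1 : K) ^ (i.val * j.val)) • c (α.symm (β y)) (R (α (β.symm x))))

variable {𝒜 : ZMod 2 → Submodule K A} {c : A →ₗ[K] A →ₗ[K] A} {α β : A ≃ₗ[K] A}
  {R : A →ₗ[K] A}

namespace IsBiHomPreLieSuperalgebra

theorem beta_alpha (hP : IsBiHomPreLieSuperalgebra 𝒜 c α β) (a : A) : β (α a) = α (β a) :=
  (hP.comm a).symm

theorem beta_alpha_symm (hP : IsBiHomPreLieSuperalgebra 𝒜 c α β) (a : A) :
    β (α.symm a) = α.symm (β a) :=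
  α.comm_symm hP.beta_alpha a

theorem beta_symm_alpha (hP : IsBiHomPreLieSuperalgebra 𝒜 c α β) (a : A) :
    β.symm (α a) = α (β.symm a) :=
  (β.comm_symm hP.comm a).symm

theorem alpha_symm_mul (hP : IsBiHomPreLieSuperalgebra 𝒜 c α β) (a b : A) :
    α.symm (c a b) = c (α.symm a) (α.symm b) :=
  α.symm_map₂ hP.alpha_mul a b

theorem beta_symm_mul (hP : IsBiHomPreLieSuperalgebra 𝒜 c α β) (a b : A) :
    β.symm (c a b) = c (β.symm a) (β.symm b) :=
  β.symm_map₂ hP.beta_mul a b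

end IsBiHomPreLieSuperalgebra

theorem IsRotaBaxterOperator.beta_symm_comm (hR : IsRotaBaxterOperator 𝒜 c α β R) (a : A) :
    R (β.symm a) = β.symm (R a) :=
  β.comm_symm hR.beta_comm a

theorem rbSucc_mem (hP : IsBiHomPreLieSuperalgebra 𝒜 c α β)
    (hR : IsRotaBaxterOperator 𝒜 c α β R) {i j : ZMod 2} {x y : A} (hx : x ∈ 𝒜 i)
    (hy : y ∈ 𝒜 j) : rbSucc c R x y ∈ 𝒜 (i + j) :=
  hP.mul_mem i j _ (hR.mem i x hx) y hy

theorem rbPrec_mem (hA : DirectSum.IsInternal 𝒜) (hP : IsBiHomPreLieSuperalgebra 𝒜 c α β)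
    (hR : IsRotaBaxterOperator 𝒜 c α β R) {i j : ZMod 2} {x y : A} (hx : x ∈ 𝒜 i)
    (hy : y ∈ 𝒜 j) : rbPrec c α β R i j x y ∈ 𝒜 (i + j) := by
  rw [rbPrec, add_comm i j]
  exact neg_mem <| Submodule.smul_mem _ _ <| hP.mul_mem j i _
    (hA.symm_mem α hP.alpha_mem (hP.beta_mem j y hy)) _
    (hR.mem i _ (hP.alpha_mem i _ (hA.symm_mem β hP.beta_mem hx)))

theorem map_rbSucc {f : A → A} (hf : ∀ a b, f (c a b) = c (f a) (f b))
    (hR : ∀ a, R (f a) = f (R a)) (x y : A) : f (rbSucc c R x y) = rbSucc c R (f x) (f y) := by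
  rw [rbSucc, rbSucc, hf, hR]

theorem map_rbPrec {f : A →ₗ[K] A} (hf : ∀ a b, f (c a b) = c (f a) (f b))
    (hR : ∀ a, R (f a) = f (R a)) (hα : ∀ a, f (α a) = α (f a)) (hβ : ∀ a, f (β a) = β (f a))
    (i j : ZMod 2) (x y : A) :
    f (rbPrec c α β R i j x y) = rbPrec c α β R i j (f x) (f y) := by
  simp only [rbPrec, map_neg, map_smul, hf, ← hR, hα, α.comm_symm hα, hβ, β.comm_symm hβ]

theorem rbSucc_alpha_beta_rbSucc (hP : IsBiHomPreLieSuperalgebra 𝒜 c α β)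
    (hR : IsRotaBaxterOperator 𝒜 c α β R) {i j k : ZMod 2} {x y z : A} (hx : x ∈ 𝒜 i)
    (hy : y ∈ 𝒜 j) (hz : z ∈ 𝒜 k) :
    rbSucc c R (α (β x)) (rbSucc c R (α y) z)
      = rbSucc c R (rbSucc c R (β x) (α y)) (β z)
        + rbSucc c R (rbPrec c α β R i j (β x) (α y)) (β z)
        + ((-1 : K) ^ (i.val * j.val)) • rbSucc c R (α (β y)) (rbSucc c R (α x) z)
        - ((-1 : K) ^ (i.val * j.val)) • rbSucc c R (rbPrec c α β R j i (β y) (α x)) (β z)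
        - ((-1 : K) ^ (i.val * j.val)) • rbSucc c R (rbSucc c R (β y) (α x)) (β z) := by
  have preLie := hP.preLie i j k (R x) (hR.mem i x hx) (R y) (hR.mem j y hy) z hz
  have rb_xy := congrArg (c · (β z))
    (hR.rotaBaxter i j (β x) (hP.beta_mem i x hx) (α y) (hP.alpha_mem j y hy))
  have rb_yx := congrArg (c · (β z))
    (hR.rotaBaxter j i (β y) (hP.beta_mem j y hy) (α x) (hP.alpha_mem i x hx))
  have sign_sq : (-1 : K) ^ (i.val * j.val * 2) = 1 := Even.neg_one_pow ⟨i.val * j.val, by ring⟩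
  simp only [rbSucc, rbPrec, hP.beta_alpha, hR.alpha_comm, hR.beta_comm,
    LinearEquiv.symm_apply_apply, map_neg, map_smul, map_add, LinearMap.add_apply,
    LinearMap.neg_apply, LinearMap.smul_apply, smul_neg, smul_smul] at rb_xy rb_yx ⊢
  linear_combination (norm := module) -preLie + rb_xy - ((-1 : K) ^ (i.val * j.val)) • rb_yx
    - sign_sq • c (R (c (β x) (α (R y)))) (β z)

theorem rbSucc_alpha_beta_rbPrec (hA : DirectSum.IsInternal 𝒜)
    (hP : IsBiHomPreLieSuperalgebra 𝒜 c α β) (hR : IsRotaBaxterOperator 𝒜 c α β R)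
    {i j k : ZMod 2} {x y z : A} (hx : x ∈ 𝒜 i) (hy : y ∈ 𝒜 j) (hz : z ∈ 𝒜 k) :
    rbSucc c R (α (β x)) (rbPrec c α β R j k (α y) z)
      = rbPrec c α β R (i + j) k (rbSucc c R (β x) (α y)) (β z)
        + ((-1 : K) ^ (i.val * j.val)) • rbPrec c α β R j (i + k) (α (β y)) (rbSucc c R (α x) z)
        + ((-1 : K) ^ (i.val * j.val)) •
            rbPrec c α β R j (i + k) (α (β y)) (rbPrec c α β R i k (α x) z)
        - ((-1 : K) ^ (i.val * j.val)) •
            rbPrec c α β R (j + i) k (rbPrec c α β R j i (β y) (α x)) (β z) := by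
  have hz' : α.symm (α.symm (β z)) ∈ 𝒜 k :=
    hA.symm_mem α hP.alpha_mem (hA.symm_mem α hP.alpha_mem (hP.beta_mem k z hz))
  have hy' : α (α (β.symm y)) ∈ 𝒜 j :=
    hP.alpha_mem j _ (hP.alpha_mem j _ (hA.symm_mem β hP.beta_mem hy))
  have preLie := hP.preLie i k j (R x) (hR.mem i x hx) _ hz' _ (hR.mem j _ hy')
  have rb := congrArg (c (α.symm (β (β z))))
    (hR.rotaBaxter i j (α x) (hP.alpha_mem i x hx) _ hy')
  have sign_sq : (-1 : K) ^ (i.val * j.val * 2) = 1 := Even.neg_one_pow ⟨i.val * j.val, by ring⟩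
  simp only [rbSucc, rbPrec, neg_one_pow_val_add_mul, neg_one_pow_val_mul_add, hP.beta_alpha,
    hP.beta_alpha_symm, hP.beta_symm_alpha, hR.alpha_comm, hR.beta_comm, hR.beta_symm_comm,
    hP.alpha_mul, hP.beta_mul, hP.alpha_symm_mul, hP.beta_symm_mul, LinearEquiv.symm_apply_apply,
    LinearEquiv.apply_symm_apply, map_add, map_neg, map_smul, LinearMap.neg_apply,
    LinearMap.smul_apply, smul_neg, neg_neg, smul_smul] at preLie rb ⊢
  linear_combination (norm := module) ((-1 : K) ^ (j.val * k.val)) • preLie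
    - (((-1 : K) ^ (i.val * k.val)) * ((-1 : K) ^ (j.val * k.val))) • rb
    + sign_sq • (((-1 : K) ^ (j.val * k.val)) • c (c (β (R x)) (α.symm (β z))) (α (α (R y)))
        - (((-1 : K) ^ (i.val * k.val)) * ((-1 : K) ^ (j.val * k.val))) •
          (c (c (α.symm (α.symm (β (β z)))) (α (R x))) (α (α (R y)))
            - c (α.symm (β (β z))) (R (c (α x) (α (α (β.symm (R y))))))))

theorem statement16_general
    (K : Type) [Field K]
    (A : Type) [AddCommGroup A] [Module K A]
    (𝒜 : ZMod 2 → Submodule K A)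
    (hA : DirectSum.IsInternal 𝒜)
    (c : A →ₗ[K] A →ₗ[K] A)
    (α β : A ≃ₗ[K] A)
    (hcomm : ∀ a, α (β a) = β (α a))
    (hαe : ∀ i : ZMod 2, ∀ a ∈ 𝒜 i, α a ∈ 𝒜 i)
    (hβe : ∀ i : ZMod 2, ∀ a ∈ 𝒜 i, β a ∈ 𝒜 i)
    (hce : ∀ i j : ZMod 2, ∀ x ∈ 𝒜 i, ∀ y ∈ 𝒜 j, c x y ∈ 𝒜 (i + j))
    (hαm : ∀ a b : A, α (c a b) = c (α a) (α b))
    (hβm : ∀ a b : A, β (c a b) = c (β a) (β b))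
    (hpre : ∀ i j k : ZMod 2, ∀ x ∈ 𝒜 i, ∀ y ∈ 𝒜 j, ∀ z ∈ 𝒜 k,
      c (c (β x) (α y)) (β z) - c (α (β x)) (c (α y) z)
        = ((-1 : K) ^ (i.val * j.val)) •
            (c (c (β y) (α x)) (β z) - c (α (β y)) (c (α x) z)))
    -- R is a Rota-Baxter operator of weight zero
    (R : A →ₗ[K] A)
    (hRe : ∀ i : ZMod 2, ∀ a ∈ 𝒜 i, R a ∈ 𝒜 i)
    (hRα : ∀ a, R (α a) = α (R a))
    (hRβ : ∀ a, R (β a) = β (R a))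
    (hRB : ∀ i j : ZMod 2, ∀ x ∈ 𝒜 i, ∀ y ∈ 𝒜 j,
      c (R x) (R y) = R (c (R x) y + c x (R y)))
    -- the products ▷ and ◁
    (dr : A → A → A) (hdr : ∀ x y, dr x y = c (R x) y)
    (dl : ZMod 2 → ZMod 2 → A → A → A)
    (hdl : ∀ i j x y, dl i j x y
      = -(((-1 : K) ^ (i.val * j.val)) • c (α.symm (β y)) (R (α (β.symm x))))) :
    -- `(A,▷,◁,α,β)` is a BiHom-L-dendriform superalgebra:
    (∀ i j : ZMod 2, ∀ x ∈ 𝒜 i, ∀ y ∈ 𝒜 j, dr x y ∈ 𝒜 (i + j))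
    ∧ (∀ i j : ZMod 2, ∀ x ∈ 𝒜 i, ∀ y ∈ 𝒜 j, dl i j x y ∈ 𝒜 (i + j))
    ∧ (∀ x y : A, α (dr x y) = dr (α x) (α y))
    ∧ (∀ x y : A, β (dr x y) = dr (β x) (β y))
    ∧ (∀ i j : ZMod 2, ∀ x ∈ 𝒜 i, ∀ y ∈ 𝒜 j, α (dl i j x y) = dl i j (α x) (α y))
    ∧ (∀ i j : ZMod 2, ∀ x ∈ 𝒜 i, ∀ y ∈ 𝒜 j, β (dl i j x y) = dl i j (β x) (β y))
    ∧ (∀ i j k : ZMod 2, ∀ x ∈ 𝒜 i, ∀ y ∈ 𝒜 j, ∀ z ∈ 𝒜 k,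
        dr (α (β x)) (dr (α y) z)
          = dr (dr (β x) (α y)) (β z) + dr (dl i j (β x) (α y)) (β z)
            + ((-1 : K) ^ (i.val * j.val)) • dr (α (β y)) (dr (α x) z)
            - ((-1 : K) ^ (i.val * j.val)) • dr (dl j i (β y) (α x)) (β z)
            - ((-1 : K) ^ (i.val * j.val)) • dr (dr (β y) (α x)) (β z))
    ∧ (∀ i j k : ZMod 2, ∀ x ∈ 𝒜 i, ∀ y ∈ 𝒜 j, ∀ z ∈ 𝒜 k,
        dr (α (β x)) (dl j k (α y) z)
          = dl (i + j) k (dr (β x) (α y)) (β z)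
            + ((-1 : K) ^ (i.val * j.val)) • dl j (i + k) (α (β y)) (dr (α x) z)
            + ((-1 : K) ^ (i.val * j.val)) • dl j (i + k) (α (β y)) (dl i k (α x) z)
            - ((-1 : K) ^ (i.val * j.val)) • dl (j + i) k (dl j i (β y) (α x)) (β z)) := by
  have hP : IsBiHomPreLieSuperalgebra 𝒜 c α β := ⟨hcomm, hαe, hβe, hce, hαm, hβm, hpre⟩
  have hR : IsRotaBaxterOperator 𝒜 c α β R := ⟨hRe, hRα, hRβ, hRB⟩
  obtain rfl : dr = rbSucc c R := funext fun x => funext (hdr x)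
  obtain rfl : dl = rbPrec c α β R := by
    funext i j x y
    exact hdl i j x y
  exact ⟨fun i j x hx y hy => rbSucc_mem hP hR hx hy,
    fun i j x hx y hy => rbPrec_mem hA hP hR hx hy,
    map_rbSucc hαm hRα, map_rbSucc hβm hRβ,
    fun i j x _ y _ => map_rbPrec (f := α.toLinearMap) hαm hRα (fun _ => rfl) hcomm i j x y,
    fun i j x _ y _ =>
      map_rbPrec (f := β.toLinearMap) hβm hRβ hP.beta_alpha (fun _ => rfl) i j x y,
    fun i j k x hx y hy z hz => rbSucc_alpha_beta_rbSucc hP hR hx hy hz,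
    fun i j k x hx y hy z hz => rbSucc_alpha_beta_rbPrec hA hP hR hx hy hz⟩

theorem statement16
    (K : Type) [Field K] [CharZero K]
    (A : Type) [AddCommGroup A] [Module K A]
    (𝒜 : ZMod 2 → Submodule K A)
    (hA : DirectSum.IsInternal 𝒜)
    (c : A →ₗ[K] A →ₗ[K] A)
    (α β : A ≃ₗ[K] A)
    (hcomm : ∀ a, α (β a) = β (α a))
    (hαe : ∀ i : ZMod 2, ∀ a ∈ 𝒜 i, α a ∈ 𝒜 i)
    (hβe : ∀ i : ZMod 2, ∀ a ∈ 𝒜 i, β a ∈ 𝒜 i)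
    (hce : ∀ i j : ZMod 2, ∀ x ∈ 𝒜 i, ∀ y ∈ 𝒜 j, c x y ∈ 𝒜 (i + j))
    (hαm : ∀ a b : A, α (c a b) = c (α a) (α b))
    (hβm : ∀ a b : A, β (c a b) = c (β a) (β b))
    (hpre : ∀ i j k : ZMod 2, ∀ x ∈ 𝒜 i, ∀ y ∈ 𝒜 j, ∀ z ∈ 𝒜 k,
      c (c (β x) (α y)) (β z) - c (α (β x)) (c (α y) z)
        = ((-1 : K) ^ (i.val * j.val)) •
            (c (c (β y) (α x)) (β z) - c (α (β y)) (c (α x) z)))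
    -- R is a Rota-Baxter operator of weight zero
    (R : A →ₗ[K] A)
    (hRe : ∀ i : ZMod 2, ∀ a ∈ 𝒜 i, R a ∈ 𝒜 i)
    (hRα : ∀ a, R (α a) = α (R a))
    (hRβ : ∀ a, R (β a) = β (R a))
    (hRB : ∀ i j : ZMod 2, ∀ x ∈ 𝒜 i, ∀ y ∈ 𝒜 j,
      c (R x) (R y) = R (c (R x) y + c x (R y)))
    -- the products ▷ and ◁
    (dr : A → A → A) (hdr : ∀ x y, dr x y = c (R x) y)
    (dl : ZMod 2 → ZMod 2 → A → A → A)
    (hdl : ∀ i j x y, dl i j x y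
      = -(((-1 : K) ^ (i.val * j.val)) • c (α.symm (β y)) (R (α (β.symm x))))) :
    -- `(A,▷,◁,α,β)` is a BiHom-L-dendriform superalgebra:
    (∀ i j : ZMod 2, ∀ x ∈ 𝒜 i, ∀ y ∈ 𝒜 j, dr x y ∈ 𝒜 (i + j))
    ∧ (∀ i j : ZMod 2, ∀ x ∈ 𝒜 i, ∀ y ∈ 𝒜 j, dl i j x y ∈ 𝒜 (i + j))
    ∧ (∀ x y : A, α (dr x y) = dr (α x) (α y))
    ∧ (∀ x y : A, β (dr x y) = dr (β x) (β y))
    ∧ (∀ i j : ZMod 2, ∀ x ∈ 𝒜 i, ∀ y ∈ 𝒜 j, α (dl i j x y) = dl i j (α x) (α y))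
    ∧ (∀ i j : ZMod 2, ∀ x ∈ 𝒜 i, ∀ y ∈ 𝒜 j, β (dl i j x y) = dl i j (β x) (β y))
    ∧ (∀ i j k : ZMod 2, ∀ x ∈ 𝒜 i, ∀ y ∈ 𝒜 j, ∀ z ∈ 𝒜 k,
        dr (α (β x)) (dr (α y) z)
          = dr (dr (β x) (α y)) (β z) + dr (dl i j (β x) (α y)) (β z)
            + ((-1 : K) ^ (i.val * j.val)) • dr (α (β y)) (dr (α x) z)
            - ((-1 : K) ^ (i.val * j.val)) • dr (dl j i (β y) (α x)) (β z)
            - ((-1 : K) ^ (i.val * j.val)) • dr (dr (β y) (α x)) (β z))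
    ∧ (∀ i j k : ZMod 2, ∀ x ∈ 𝒜 i, ∀ y ∈ 𝒜 j, ∀ z ∈ 𝒜 k,
        dr (α (β x)) (dl j k (α y) z)
          = dl (i + j) k (dr (β x) (α y)) (β z)
            + ((-1 : K) ^ (i.val * j.val)) • dl j (i + k) (α (β y)) (dr (α x) z)
            + ((-1 : K) ^ (i.val * j.val)) • dl j (i + k) (α (β y)) (dl i k (α x) z)
            - ((-1 : K) ^ (i.val * j.val)) • dl (j + i) k (dl j i (β y) (α x)) (β z)) :=
  statement16_general K A 𝒜 hA c α β hcomm hαe hβe hce hαm hβm hpre R hRe hRα hRβ hRB dr hdr dl hdl
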